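/- Let W be an irreducible T-module with endpoint r and diameter d. Then Q_d·W = E*_{r+d} W and Q_{−d}·W = E*_r W; moreover Q_i·W = 0 and Q_{−i}·W = 0 for all i ≥ d+1. Consequently d = max{i : 0 ≤ i ≤ D, Q_i W ≠ 0}. -/

import Mathlib

open Matrix BigOperators

noncomputable section

variable {X : Type*} [Fintype X] [DecidableEq X]

/-- The adjacency matrix of a graph, over ℂ. -/
def adjMat (G : SimpleGraph X) [DecidableRel G.Adj] : Matrix X X ℂ :=
  Matrix.of fun y z => if G.Adj y z then 1 else 0

/-- The dual idempotent `E*_i`: diagonal 0-1 matrix projecting onto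
vertices at distance `i` from `x` (zero for `i` outside the distance range). -/
def Estar (G : SimpleGraph X) (x : X) (i : ℤ) : Matrix X X ℂ :=
  Matrix.diagonal fun y => if (G.dist x y : ℤ) = i then 1 else 0

/-- The lowering matrix `L = Σ_{i=1}^D E*_{i-1} A E*_i`. -/
def lowerM (G : SimpleGraph X) [DecidableRel G.Adj] (x : X) (D : ℕ) : Matrix X X ℂ :=
  ∑ i ∈ Finset.Icc 1 D, Estar G x ((i : ℤ) - 1) * adjMat G * Estar G x i

/-- The flat matrix `F = Σ_{i=0}^D E*_i A E*_i`. -/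
def flatM (G : SimpleGraph X) [DecidableRel G.Adj] (x : X) (D : ℕ) : Matrix X X ℂ :=
  ∑ i ∈ Finset.range (D + 1), Estar G x i * adjMat G * Estar G x i

/-- The raising matrix `R = Σ_{i=0}^{D-1} E*_{i+1} A E*_i`. -/
def raiseM (G : SimpleGraph X) [DecidableRel G.Adj] (x : X) (D : ℕ) : Matrix X X ℂ :=
  ∑ i ∈ Finset.range D, Estar G x ((i : ℤ) + 1) * adjMat G * Estar G x i

/-- The subconstituent (Terwilliger) algebra `T`, generated by `A` and the `E*_i`. -/
def Talg (G : SimpleGraph X) [DecidableRel G.Adj] (x : X) (D : ℕ) :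
    Subalgebra ℂ (Matrix X X ℂ) :=
  Algebra.adjoin ℂ (insert (adjMat G) (Estar G x '' Set.Icc (0 : ℤ) (D : ℤ)))

/-- The quantum adjacency algebra `Q`, generated by `L, F, R`. -/
def Qalg (G : SimpleGraph X) [DecidableRel G.Adj] (x : X) (D : ℕ) :
    Subalgebra ℂ (Matrix X X ℂ) :=
  Algebra.adjoin ℂ {lowerM G x D, flatM G x D, raiseM G x D}

/-- The dual adjacency algebra `M*`, the span of the `E*_i`. -/
def Mstar (G : SimpleGraph X) (x : X) (D : ℕ) : Submodule ℂ (Matrix X X ℂ) :=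
  Submodule.span ℂ (Estar G x '' Set.Icc (0 : ℤ) (D : ℤ))

/-- The graded component `T_n = Σ_i E*_{i+n} T E*_i`. -/
def Tgraded (G : SimpleGraph X) [DecidableRel G.Adj] (x : X) (D : ℕ) (n : ℤ) :
    Submodule ℂ (Matrix X X ℂ) :=
  Submodule.span ℂ
    {M | ∃ i : ℤ, ∃ S ∈ Talg G x D, M = Estar G x (i + n) * S * Estar G x i}

/-- The graded component `Q_n = Q ∩ T_n`. -/
def Qgraded (G : SimpleGraph X) [DecidableRel G.Adj] (x : X) (D : ℕ) (n : ℤ) :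
    Submodule ℂ (Matrix X X ℂ) :=
  (Subalgebra.toSubmodule (Qalg G x D)) ⊓ Tgraded G x D n

/-- `W` is an irreducible module for the algebra `A₀ ⊆ Mat_X(ℂ)` (acting on `V = ℂ^X`
by matrix-vector multiplication). -/
def IsIrredMod (A₀ : Subalgebra ℂ (Matrix X X ℂ)) (W : Submodule ℂ (X → ℂ)) : Prop :=
  (∀ S ∈ A₀, ∀ w ∈ W, S.mulVec w ∈ W) ∧ W ≠ ⊥ ∧
    ∀ W' : Submodule ℂ (X → ℂ), W' ≤ W →
      (∀ S ∈ A₀, ∀ w ∈ W', S.mulVec w ∈ W') → W' = ⊥ ∨ W' = W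

/-- The subspace `E*_i W`. -/
def Emap (G : SimpleGraph X) (x : X) (i : ℤ) (W : Submodule ℂ (X → ℂ)) :
    Submodule ℂ (X → ℂ) :=
  W.map (Estar G x i).mulVecLin

/-- The subspace `P · W` spanned by all `S w`, `S ∈ P`, `w ∈ W`. -/
def actSp (P : Submodule ℂ (Matrix X X ℂ)) (W : Submodule ℂ (X → ℂ)) :
    Submodule ℂ (X → ℂ) :=
  Submodule.span ℂ {v | ∃ S ∈ P, ∃ w ∈ W, v = S.mulVec w}

/-- The statement: `W` has endpoint `r` and diameter `d`, i.e. `E*_i W ≠ 0`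
iff `r ≤ i ≤ r + d`. -/
def HasEndpointDiam (G : SimpleGraph X) (x : X) (W : Submodule ℂ (X → ℂ))
    (r d : ℕ) : Prop :=
  ∀ i : ℤ, Emap G x i W ≠ ⊥ ↔ ((r : ℤ) ≤ i ∧ i ≤ (r : ℤ) + (d : ℤ))

/-- `σ` restricts to an isomorphism of `Q`-modules from `U` to `W`. -/
def IsQIso (G : SimpleGraph X) [DecidableRel G.Adj] (x : X) (D : ℕ)
    (U W : Submodule ℂ (X → ℂ)) (σ : (X → ℂ) →ₗ[ℂ] (X → ℂ)) : Prop :=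
  U.map σ = W ∧ (∀ u ∈ U, σ u = 0 → u = 0) ∧
    ∀ S ∈ Qalg G x D, ∀ u ∈ U, σ (S.mulVec u) = S.mulVec (σ u)

/-- `σ` restricts to an isomorphism of `T`-modules from `U` to `W`. -/
def IsTIso (G : SimpleGraph X) [DecidableRel G.Adj] (x : X) (D : ℕ)
    (U W : Submodule ℂ (X → ℂ)) (σ : (X → ℂ) →ₗ[ℂ] (X → ℂ)) : Prop :=
  U.map σ = W ∧ (∀ u ∈ U, σ u = 0 → u = 0) ∧
    ∀ S ∈ Talg G x D, ∀ u ∈ U, σ (S.mulVec u) = S.mulVec (σ u)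

/-- `σ` restricts to a quasi-isomorphism of `T`-modules from `U` to `W`,
with endpoint shift `n`. -/
def IsQuasiIso (G : SimpleGraph X) [DecidableRel G.Adj] (x : X) (D : ℕ)
    (U W : Submodule ℂ (X → ℂ)) (σ : (X → ℂ) →ₗ[ℂ] (X → ℂ)) (n : ℤ) : Prop :=
  U.map σ = W ∧ (∀ u ∈ U, σ u = 0 → u = 0) ∧
    (∀ u ∈ U, σ ((lowerM G x D).mulVec u) = (lowerM G x D).mulVec (σ u)) ∧
    (∀ u ∈ U, σ ((flatM G x D).mulVec u) = (flatM G x D).mulVec (σ u)) ∧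
    (∀ u ∈ U, σ ((raiseM G x D).mulVec u) = (raiseM G x D).mulVec (σ u)) ∧
    ∀ i : ℤ, ∀ u ∈ U, σ ((Estar G x i).mulVec u) = (Estar G x (i + n)).mulVec (σ u)

end

/-!
Adjacent vertices have distances from `x` differing by at most one, so `A = L + F + R` lies in
`Q`, and `Q` is spanned by its homogeneous pieces `Q_n` because `L, F, R` have degrees `-1, 0, 1`.
An element `s ∈ T_n` satisfies `E*_{i+n} s = s E*_i`, so `Q_n` maps `E*_i W` into `E*_{i+n} W`;
this gives `Q_d W ⊆ E*_{r+d} W`, `Q_{-d} W ⊆ E*_r W` and `Q_n W = 0` for `|n| > d`.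
Conversely, `Q · E*_k W` is `Q`-invariant and, by the grading, `E*`-invariant, hence a
`T`-submodule of `W`; by irreducibility it is all of `W` when `E*_k W ≠ 0`, and projecting onto
`E*_m W` shows `E*_m W ⊆ Q_{m-k} W`.
-/

section Estar

variable {X : Type*} [DecidableEq X] {G : SimpleGraph X} {x : X} {D : ℕ}

lemma Estar_eq_zero_of_notMem (hD : ∀ y, G.dist x y ≤ D) {i : ℤ}
    (hi : i ∉ Set.Icc 0 (D : ℤ)) : Estar G x i = 0 := by
  rw [Estar, ← diagonal_zero]
  congr 1
  funext y
  rw [if_neg]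
  rintro rfl
  exact hi ⟨by positivity, by exact_mod_cast hD y⟩

lemma sum_Estar (hD : ∀ y, G.dist x y ≤ D) :
    ∑ i ∈ Finset.Icc 0 (D : ℤ), Estar G x i = 1 := by
  ext y z
  rw [Matrix.sum_apply]
  by_cases hyz : y = z
  · subst hyz
    simp [Estar, one_apply, hD y]
  · simp [Estar, diagonal_apply_ne _ hyz, one_apply_ne hyz]

variable [Fintype X] (G x)

lemma Estar_mul_Estar (i j : ℤ) :
    Estar G x i * Estar G x j = if i = j then Estar G x i else 0 := by
  unfold Estar
  rw [diagonal_mul_diagonal]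
  split_ifs with h
  · subst h
    congr 1
    funext y
    split_ifs <;> simp
  · rw [← diagonal_zero]
    congr 1
    funext y
    split_ifs <;> simp_all

lemma Estar_mul_self (i : ℤ) : Estar G x i * Estar G x i = Estar G x i := by
  simp [Estar_mul_Estar]

lemma Estar_mulVec_apply (i : ℤ) (v : X → ℂ) (y : X) :
    (Estar G x i *ᵥ v) y = if (G.dist x y : ℤ) = i then v y else 0 := by
  simp [Estar, mulVec_diagonal]

lemma Estar_mulVec_eq_self_of_forall_ne {v : X → ℂ} {j : ℤ}
    (h : ∀ i, i ≠ j → Estar G x i *ᵥ v = 0) : Estar G x j *ᵥ v = v := by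
  ext y
  rw [Estar_mulVec_apply]
  split_ifs with hy
  · rfl
  · simpa [Estar_mulVec_apply] using (congr_fun (h _ hy) y).symm

end Estar

section Algebras

variable {X : Type*} [Fintype X] [DecidableEq X] (G : SimpleGraph X) [DecidableRel G.Adj]
  (x : X) (D : ℕ)

lemma adjMat_eq_lowerM_add_flatM_add_raiseM (hD : ∀ y, G.dist x y ≤ D) :
    adjMat G = lowerM G x D + flatM G x D + raiseM G x D := by
  ext y z
  simp only [lowerM, flatM, raiseM, Matrix.add_apply, Matrix.sum_apply, Estar, adjMat,
    diagonal_mul, mul_diagonal, of_apply]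
  by_cases hyz : G.Adj y z
  · have hstep := hyz.diff_dist_adj (u := x)
    have hy := hD y
    have hz := hD z
    simp only [hyz, ↓reduceIte, mul_one, Nat.cast_inj, mul_ite, mul_zero, Finset.sum_ite_eq,
      Finset.mem_Icc, Finset.mem_range, Order.lt_add_one_iff]
    split_ifs <;> norm_num <;> omega
  · simp [hyz]

lemma adjMat_mem_Talg : adjMat G ∈ Talg G x D :=
  Algebra.subset_adjoin (Set.mem_insert _ _)

lemma lowerM_mem_Qalg : lowerM G x D ∈ Qalg G x D :=
  Algebra.subset_adjoin (by simp)

lemma flatM_mem_Qalg : flatM G x D ∈ Qalg G x D :=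
  Algebra.subset_adjoin (by simp)

lemma raiseM_mem_Qalg : raiseM G x D ∈ Qalg G x D :=
  Algebra.subset_adjoin (by simp)

lemma lowerM_mem_Tgraded : lowerM G x D ∈ Tgraded G x D (-1) :=
  Submodule.sum_mem _ fun i _ =>
    Submodule.subset_span ⟨i, adjMat G, adjMat_mem_Talg G x D, by rw [sub_eq_add_neg]⟩

lemma flatM_mem_Tgraded : flatM G x D ∈ Tgraded G x D 0 :=
  Submodule.sum_mem _ fun i _ =>
    Submodule.subset_span ⟨i, adjMat G, adjMat_mem_Talg G x D, by rw [add_zero]⟩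

lemma raiseM_mem_Tgraded : raiseM G x D ∈ Tgraded G x D 1 :=
  Submodule.sum_mem _ fun i _ =>
    Submodule.subset_span ⟨i, adjMat G, adjMat_mem_Talg G x D, rfl⟩

variable {G x D}

lemma Estar_mem_Talg (hD : ∀ y, G.dist x y ≤ D) (i : ℤ) : Estar G x i ∈ Talg G x D := by
  by_cases hi : i ∈ Set.Icc 0 (D : ℤ)
  · exact Algebra.subset_adjoin (Set.mem_insert_of_mem _ ⟨i, hi, rfl⟩)
  · rw [Estar_eq_zero_of_notMem hD hi]
    exact zero_mem _

lemma Qalg_le_Talg (hD : ∀ y, G.dist x y ≤ D) : Qalg G x D ≤ Talg G x D := by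
  have hterm (i j : ℤ) : Estar G x i * adjMat G * Estar G x j ∈ Talg G x D :=
    mul_mem (mul_mem (Estar_mem_Talg hD i) (adjMat_mem_Talg G x D)) (Estar_mem_Talg hD j)
  refine Algebra.adjoin_le ?_
  rintro _ (rfl | rfl | rfl) <;> exact Subalgebra.sum_mem _ fun i _ => hterm _ _

lemma mem_Talg_of_mem_Tgraded (hD : ∀ y, G.dist x y ≤ D) {n : ℤ} {s : Matrix X X ℂ}
    (hs : s ∈ Tgraded G x D n) : s ∈ Talg G x D := by
  refine Submodule.span_le (p := Subalgebra.toSubmodule (Talg G x D)) |>.mpr ?_ hs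
  rintro _ ⟨i, S, hS, rfl⟩
  exact (Subalgebra.mem_toSubmodule _).mpr
    (mul_mem (mul_mem (Estar_mem_Talg hD _) hS) (Estar_mem_Talg hD _))

lemma Estar_add_mul_of_mem_Tgraded {n : ℤ} {s : Matrix X X ℂ} (hs : s ∈ Tgraded G x D n)
    (i : ℤ) : Estar G x (i + n) * s = s * Estar G x i := by
  induction hs using Submodule.span_induction with
  | mem s hs =>
    obtain ⟨j, S, -, rfl⟩ := hs
    simp only [mul_assoc]
    rw [← mul_assoc (Estar G x (i + n)), Estar_mul_Estar, Estar_mul_Estar]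
    by_cases h : i = j
    · simp [h]
    · simp [h, Ne.symm h]
  | zero => simp
  | add a b _ _ ha hb => rw [mul_add, add_mul, ha, hb]
  | smul c a _ ha => rw [mul_smul_comm, smul_mul_assoc, ha]

lemma Estar_mul_of_mem_Tgraded {n : ℤ} {s : Matrix X X ℂ} (hs : s ∈ Tgraded G x D n)
    (i : ℤ) : Estar G x i * s = s * Estar G x (i - n) := by
  simpa using Estar_add_mul_of_mem_Tgraded hs (i - n)

lemma mul_mem_Tgraded (hD : ∀ y, G.dist x y ≤ D) {m n : ℤ} {a b : Matrix X X ℂ}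
    (ha : a ∈ Tgraded G x D m) (hb : b ∈ Tgraded G x D n) : a * b ∈ Tgraded G x D (m + n) := by
  induction hb using Submodule.span_induction with
  | mem b hb =>
    obtain ⟨j, S, hS, rfl⟩ := hb
    rw [← mul_assoc, ← mul_assoc, ← Estar_add_mul_of_mem_Tgraded ha,
      show j + n + m = j + (m + n) by ring, mul_assoc _ a]
    exact Submodule.subset_span ⟨j, a * S, mul_mem (mem_Talg_of_mem_Tgraded hD ha) hS, rfl⟩
  | zero => simp
  | add b c _ _ hb hc => rw [mul_add]; exact add_mem hb hc
  | smul c b _ hb => rw [mul_smul_comm]; exact Submodule.smul_mem _ c hb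

lemma one_mem_Tgraded (hD : ∀ y, G.dist x y ≤ D) : (1 : Matrix X X ℂ) ∈ Tgraded G x D 0 := by
  rw [← sum_Estar hD]
  exact Submodule.sum_mem _ fun i _ =>
    Submodule.subset_span ⟨i, 1, one_mem (Talg G x D), by rw [add_zero, mul_one, Estar_mul_self]⟩

lemma mul_mem_Qgraded (hD : ∀ y, G.dist x y ≤ D) {m n : ℤ} {a b : Matrix X X ℂ}
    (ha : a ∈ Qgraded G x D m) (hb : b ∈ Qgraded G x D n) : a * b ∈ Qgraded G x D (m + n) :=
  ⟨(Subalgebra.mem_toSubmodule _).mpr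
    (mul_mem ((Subalgebra.mem_toSubmodule _).mp ha.1) ((Subalgebra.mem_toSubmodule _).mp hb.1)),
    mul_mem_Tgraded hD ha.2 hb.2⟩

lemma mem_iSup_Qgraded_of_mem_Qalg (hD : ∀ y, G.dist x y ≤ D) {q : Matrix X X ℂ}
    (hq : q ∈ Qalg G x D) : q ∈ ⨆ n, Qgraded G x D n := by
  have hone : (1 : Matrix X X ℂ) ∈ ⨆ n, Qgraded G x D n :=
    Submodule.mem_iSup_of_mem 0 ⟨one_mem (Qalg G x D), one_mem_Tgraded hD⟩
  have hmul : (⨆ n, Qgraded G x D n) * (⨆ n, Qgraded G x D n) ≤ ⨆ n, Qgraded G x D n := by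
    simp only [Submodule.iSup_mul, Submodule.mul_iSup, iSup_le_iff, Submodule.mul_le]
    exact fun n m a ha b hb => Submodule.mem_iSup_of_mem (m + n) (mul_mem_Qgraded hD ha hb)
  refine Algebra.adjoin_le (S := (⨆ n, Qgraded G x D n).toSubalgebra hone
    fun a b ha hb => hmul (Submodule.mul_mem_mul ha hb)) ?_ hq
  rintro _ (rfl | rfl | rfl)
  · exact Submodule.mem_iSup_of_mem (-1) ⟨lowerM_mem_Qalg G x D, lowerM_mem_Tgraded G x D⟩
  · exact Submodule.mem_iSup_of_mem 0 ⟨flatM_mem_Qalg G x D, flatM_mem_Tgraded G x D⟩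
  · exact Submodule.mem_iSup_of_mem 1 ⟨raiseM_mem_Qalg G x D, raiseM_mem_Tgraded G x D⟩

lemma exists_mem_Qgraded_Estar_mul_mul_Estar (hD : ∀ y, G.dist x y ≤ D) {q : Matrix X X ℂ}
    (hq : q ∈ Qalg G x D) (m k : ℤ) :
    ∃ q' ∈ Qgraded G x D (m - k), Estar G x m * q * Estar G x k = q' * Estar G x k := by
  refine Submodule.iSup_induction _ (motive := fun q =>
    ∃ q' ∈ Qgraded G x D (m - k), Estar G x m * q * Estar G x k = q' * Estar G x k)
    (mem_iSup_Qgraded_of_mem_Qalg hD hq) ?_ ?_ ?_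
  · intro n q hq
    rw [Estar_mul_of_mem_Tgraded hq.2, mul_assoc, Estar_mul_Estar]
    by_cases h : n = m - k
    · exact ⟨q, h ▸ hq, by rw [if_pos (by omega), show m - n = k by omega]⟩
    · exact ⟨0, zero_mem _, by rw [if_neg (by omega), mul_zero, zero_mul]⟩
  · exact ⟨0, zero_mem _, by simp⟩
  · rintro a b ⟨a', ha', ha⟩ ⟨b', hb', hb⟩
    exact ⟨a' + b', add_mem ha' hb', by rw [mul_add, add_mul, ha, hb, add_mul]⟩

end Algebras

section Subspaces

variable {X : Type*} [Fintype X] {W : Submodule ℂ (X → ℂ)}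

lemma mulVec_mem_actSp {P : Submodule ℂ (Matrix X X ℂ)} {S : Matrix X X ℂ} (hS : S ∈ P)
    {w : X → ℂ} (hw : w ∈ W) : S *ᵥ w ∈ actSp P W :=
  Submodule.subset_span ⟨S, hS, w, hw, rfl⟩

lemma mulVec_mem_of_mem_actSp {P : Submodule ℂ (Matrix X X ℂ)} {M : Matrix X X ℂ}
    {U : Submodule ℂ (X → ℂ)} (h : ∀ S ∈ P, ∀ w ∈ W, M *ᵥ (S *ᵥ w) ∈ U) {v : X → ℂ}
    (hv : v ∈ actSp P W) : M *ᵥ v ∈ U := by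
  refine Submodule.span_le (p := U.comap M.mulVecLin) |>.mpr ?_ hv
  rintro _ ⟨S, hS, w, hw, rfl⟩
  exact h S hS w hw

variable [DecidableEq X]

lemma mulVec_mem_of_mem_adjoin {s : Set (Matrix X X ℂ)} {U : Submodule ℂ (X → ℂ)}
    (h : ∀ M ∈ s, ∀ v ∈ U, M *ᵥ v ∈ U) {S : Matrix X X ℂ} (hS : S ∈ Algebra.adjoin ℂ s) :
    ∀ v ∈ U, S *ᵥ v ∈ U := by
  induction hS using Algebra.adjoin_induction with
  | mem M hM => exact h M hM
  | algebraMap c =>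
    intro v hv
    rw [Algebra.algebraMap_eq_smul_one, smul_mulVec, one_mulVec]
    exact U.smul_mem c hv
  | add a b _ _ ha hb =>
    intro v hv
    rw [add_mulVec]
    exact add_mem (ha v hv) (hb v hv)
  | mul a b _ _ ha hb =>
    intro v hv
    rw [← mulVec_mulVec]
    exact ha _ (hb v hv)

variable {G : SimpleGraph X} {x : X} {D : ℕ}

lemma Estar_mulVec_mem_Emap {w : X → ℂ} (hw : w ∈ W) (i : ℤ) :
    Estar G x i *ᵥ w ∈ Emap G x i W :=
  Submodule.mem_map_of_mem hw

lemma Estar_mulVec_of_mem_Emap {k : ℤ} {u : X → ℂ} (hu : u ∈ Emap G x k W) :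
    Estar G x k *ᵥ u = u := by
  obtain ⟨w, -, rfl⟩ := hu
  rw [mulVecLin_apply, mulVec_mulVec, Estar_mul_self]

lemma Estar_mulVec_eq_zero_of_Emap_eq_bot {i : ℤ} (hi : Emap G x i W = ⊥) {w : X → ℂ}
    (hw : w ∈ W) : Estar G x i *ᵥ w = 0 := by
  simpa [hi] using Estar_mulVec_mem_Emap (G := G) (x := x) hw i

lemma Emap_eq_bot_of_lt (hD : ∀ y, G.dist x y ≤ D) {i : ℤ} (hi : (D : ℤ) < i) :
    Emap G x i W = ⊥ := by
  rw [Emap, Estar_eq_zero_of_notMem hD fun h => hi.not_ge h.2]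
  simp

lemma mem_Emap_of_forall_ne {v : X → ℂ} {j : ℤ} (hv : v ∈ W)
    (h : ∀ i, i ≠ j → Estar G x i *ᵥ v = 0) : v ∈ Emap G x j W := by
  rw [← Estar_mulVec_eq_self_of_forall_ne G x h]
  exact Estar_mulVec_mem_Emap hv j

variable [DecidableRel G.Adj]

lemma Emap_le (hD : ∀ y, G.dist x y ≤ D) (hW : ∀ S ∈ Talg G x D, ∀ w ∈ W, S *ᵥ w ∈ W)
    (i : ℤ) : Emap G x i W ≤ W := by
  rintro _ ⟨w, hw, rfl⟩
  exact hW _ (Estar_mem_Talg hD i) w hw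

lemma exists_mem_Qgraded_Estar_mulVec_mulVec (hD : ∀ y, G.dist x y ≤ D) {q : Matrix X X ℂ}
    (hq : q ∈ Qalg G x D) (m : ℤ) {k : ℤ} {u : X → ℂ} (hu : u ∈ Emap G x k W) :
    ∃ q' ∈ Qgraded G x D (m - k), Estar G x m *ᵥ (q *ᵥ u) = q' *ᵥ u := by
  obtain ⟨q', hq', hblock⟩ := exists_mem_Qgraded_Estar_mul_mul_Estar hD hq m k
  refine ⟨q', hq', ?_⟩
  conv_lhs => rw [← Estar_mulVec_of_mem_Emap hu]
  rw [mulVec_mulVec, mulVec_mulVec, hblock, ← mulVec_mulVec,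
    Estar_mulVec_of_mem_Emap hu]

lemma actSp_Qgraded_le_Emap (hD : ∀ y, G.dist x y ≤ D)
    (hW : ∀ S ∈ Talg G x D, ∀ w ∈ W, S *ᵥ w ∈ W) {n j : ℤ}
    (h : ∀ i, i ≠ j → Emap G x i W = ⊥ ∨ Emap G x (i - n) W = ⊥) :
    actSp (Qgraded G x D n) W ≤ Emap G x j W := by
  refine Submodule.span_le.mpr ?_
  rintro _ ⟨s, hs, w, hw, rfl⟩
  have hsw : s *ᵥ w ∈ W := hW s (Qalg_le_Talg hD hs.1) w hw
  refine mem_Emap_of_forall_ne hsw fun i hi => ?_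
  rcases h i hi with hbot | hbot
  · exact Estar_mulVec_eq_zero_of_Emap_eq_bot hbot hsw
  · rw [mulVec_mulVec, Estar_mul_of_mem_Tgraded hs.2, ← mulVec_mulVec,
      Estar_mulVec_eq_zero_of_Emap_eq_bot hbot hw, mulVec_zero]

lemma actSp_Qalg_Emap_eq (hD : ∀ y, G.dist x y ≤ D) (hW : IsIrredMod (Talg G x D) W) {k : ℤ}
    (hk : Emap G x k W ≠ ⊥) : actSp (Subalgebra.toSubmodule (Qalg G x D)) (Emap G x k W) = W := by
  set U := actSp (Subalgebra.toSubmodule (Qalg G x D)) (Emap G x k W)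
  have hUW : U ≤ W := Submodule.span_le.mpr <| by
    rintro _ ⟨q, hq, u, hu, rfl⟩
    exact hW.1 q (Qalg_le_Talg hD hq) u (Emap_le hD hW.1 k hu)
  have hEU : Emap G x k W ≤ U := fun u hu => by
    simpa using mulVec_mem_actSp ((Subalgebra.mem_toSubmodule _).mpr (one_mem (Qalg G x D))) hu
  have hQ : ∀ p ∈ Qalg G x D, ∀ v ∈ U, p *ᵥ v ∈ U := fun p hp v hv =>
    mulVec_mem_of_mem_actSp (fun q hq u hu => by
      rw [mulVec_mulVec]
      exact mulVec_mem_actSp ((Subalgebra.mem_toSubmodule _).mpr (mul_mem hp hq)) hu) hv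
  have hE : ∀ i, ∀ v ∈ U, Estar G x i *ᵥ v ∈ U := fun i v hv =>
    mulVec_mem_of_mem_actSp (fun q hq u hu => by
      obtain ⟨q', hq', h⟩ := exists_mem_Qgraded_Estar_mulVec_mulVec hD hq i hu
      rw [h]
      exact mulVec_mem_actSp hq'.1 hu) hv
  have hT : ∀ S ∈ Talg G x D, ∀ v ∈ U, S *ᵥ v ∈ U := fun S hS =>
    mulVec_mem_of_mem_adjoin (by
      rintro _ (rfl | ⟨i, -, rfl⟩)
      · rw [adjMat_eq_lowerM_add_flatM_add_raiseM G x D hD]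
        exact hQ _ (add_mem (add_mem (lowerM_mem_Qalg G x D) (flatM_mem_Qalg G x D))
          (raiseM_mem_Qalg G x D))
      · exact hE i) hS
  exact (hW.2.2 U hUW hT).resolve_left fun hU => hk (eq_bot_iff.mpr (hU ▸ hEU))

lemma Emap_add_le_actSp_Qgraded (hD : ∀ y, G.dist x y ≤ D) (hW : IsIrredMod (Talg G x D) W)
    {k : ℤ} (hk : Emap G x k W ≠ ⊥) (n : ℤ) :
    Emap G x (k + n) W ≤ actSp (Qgraded G x D n) W := by
  rintro _ ⟨w, hw, rfl⟩
  rw [← actSp_Qalg_Emap_eq hD hW hk] at hw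
  rw [mulVecLin_apply]
  refine mulVec_mem_of_mem_actSp (fun q hq u hu => ?_) hw
  obtain ⟨q', hq', h⟩ := exists_mem_Qgraded_Estar_mulVec_mulVec hD hq (k + n) hu
  rw [h]
  exact mulVec_mem_actSp (by simpa using hq') (Emap_le hD hW.1 k hu)

end Subspaces

theorem stmt15_general {X : Type*} [Fintype X] [DecidableEq X]
    (G : SimpleGraph X) [DecidableRel G.Adj] (x : X) (D : ℕ)
    (hD : ∀ y, G.dist x y ≤ D)
    (W : Submodule ℂ (X → ℂ)) (hW : IsIrredMod (Talg G x D) W)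
    (r d : ℕ) (hrd : HasEndpointDiam G x W r d) :
    actSp (Qgraded G x D d) W = Emap G x ((r : ℤ) + (d : ℤ)) W ∧
    actSp (Qgraded G x D (-(d : ℤ))) W = Emap G x r W ∧
    (∀ i : ℤ, (d : ℤ) + 1 ≤ i →
      actSp (Qgraded G x D i) W = ⊥ ∧ actSp (Qgraded G x D (-i)) W = ⊥) ∧
    IsGreatest {i : ℕ | i ≤ D ∧ actSp (Qgraded G x D i) W ≠ ⊥} d := by
  have hbot (i : ℤ) : Emap G x i W = ⊥ ↔ ¬((r : ℤ) ≤ i ∧ i ≤ r + d) := by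
    rw [← hrd i, not_not]
  have hr : Emap G x r W ≠ ⊥ := (hrd r).mpr (by omega)
  have hrd' : Emap G x (r + d) W ≠ ⊥ := (hrd _).mpr (by omega)
  have hle (n j : ℤ)
      (h : ∀ i, i ≠ j → ¬((r : ℤ) ≤ i ∧ i ≤ r + d) ∨ ¬((r : ℤ) ≤ i - n ∧ i - n ≤ r + d)) :
      actSp (Qgraded G x D n) W ≤ Emap G x j W :=
    actSp_Qgraded_le_Emap hD hW.1 fun i hi => by simpa only [hbot] using h i hi
  have htop : actSp (Qgraded G x D d) W = Emap G x (r + d) W :=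
    le_antisymm (hle _ _ fun i _ => by omega) (Emap_add_le_actSp_Qgraded hD hW hr d)
  have hbottom : actSp (Qgraded G x D (-d)) W = Emap G x r W :=
    le_antisymm (hle _ _ fun i _ => by omega)
      (by simpa using Emap_add_le_actSp_Qgraded hD hW hrd' (-d))
  have hvanish (n : ℤ) (hn : d < n ∨ n < -d) : actSp (Qgraded G x D n) W = ⊥ :=
    eq_bot_iff.mpr <| (hle n (r - 1) fun i _ => by omega).trans ((hbot _).mpr (by omega)).le
  have hdD : d ≤ D := by
    by_contra h
    exact hrd' (Emap_eq_bot_of_lt hD (by omega))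
  refine ⟨htop, hbottom, fun i hi => ⟨hvanish i (by omega), hvanish (-i) (by omega)⟩,
    ⟨hdD, htop ▸ hrd'⟩, fun i hi => ?_⟩
  by_contra h
  exact hi.2 (hvanish i (by omega))

theorem stmt15 {X : Type*} [Fintype X] [DecidableEq X]
    (G : SimpleGraph X) [DecidableRel G.Adj] (hG : G.Connected) (x : X) (D : ℕ)
    (hD : ∀ y, G.dist x y ≤ D) (hD2 : ∃ y, G.dist x y = D)
    (W : Submodule ℂ (X → ℂ)) (hW : IsIrredMod (Talg G x D) W)
    (r d : ℕ) (hrd : HasEndpointDiam G x W r d) :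
    actSp (Qgraded G x D d) W = Emap G x ((r : ℤ) + (d : ℤ)) W ∧
    actSp (Qgraded G x D (-(d : ℤ))) W = Emap G x r W ∧
    (∀ i : ℤ, (d : ℤ) + 1 ≤ i →
      actSp (Qgraded G x D i) W = ⊥ ∧ actSp (Qgraded G x D (-i)) W = ⊥) ∧
    IsGreatest {i : ℕ | i ≤ D ∧ actSp (Qgraded G x D i) W ≠ ⊥} d :=
  stmt15_general G x D hD W hW r d hrd
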